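/- Let f ∈ ℤ[X] be a monic irreducible polynomial of degree d ≥ 2 all of whose complex roots are real. If there exists a monic polynomial g ∈ ℤ[X] that interlaces f, then |Disc(f)| ≥ d^d, where Disc(f) denotes the discriminant of f. -/

import Mathlib

/-!
Let `a₀ < ⋯ < a_{d-1}` be the roots of `f` and `g` the interlacing polynomial. Interlacing makes
every weight `cᵢ = g(aᵢ) / f'(aᵢ)` positive, and Lagrange interpolation of the monic `g` of
degree `d - 1` at the `d` roots of `f` gives `∑ cᵢ = 1`, so AM-GM yields `∏ cᵢ ≤ d⁻ᵈ`.
On the other hand `∏ g(aᵢ) = Res(f, g)` is a nonzero integer and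
`∏ |f'(aᵢ)| = |Res(f, f')| = |Disc f|`, hence `|Disc f| = ∏ |g(aᵢ)| / ∏ cᵢ ≥ dᵈ`.
-/

open Polynomial Finset

/-- `g` interlaces `f`: `f` is monic of degree `n + 1 ≥ 2` with real roots
`α 0 < α 1 < ⋯ < α n`, `g` is monic of degree `n` with real roots `β 0, …, β (n-1)`,
and `α i < β i < α (i+1)` for all `i`. -/
def Interlaces (g f : Polynomial ℤ) : Prop :=
  ∃ n : ℕ, 1 ≤ n ∧ ∃ (α : Fin (n + 1) → ℝ) (β : Fin n → ℝ),
    StrictMono α ∧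
    f.map (Int.castRingHom ℝ) = ∏ i, (X - C (α i)) ∧
    g.map (Int.castRingHom ℝ) = ∏ i, (X - C (β i)) ∧
    ∀ i : Fin n, α i.castSucc < β i ∧ β i < α i.succ

theorem Real.prod_le_sum_div_card_pow {ι : Type*} (s : Finset ι) {z : ι → ℝ}
    (hz : ∀ i ∈ s, 0 ≤ z i) : ∏ i ∈ s, z i ≤ ((∑ i ∈ s, z i) / #s) ^ #s := by
  rcases s.eq_empty_or_nonempty with rfl | hs
  · simp
  have hcard : (0 : ℝ) < #s := by exact_mod_cast hs.card_pos
  have hamgm := Real.geom_mean_le_arith_mean s (fun _ => 1) z (fun _ _ => zero_le_one)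
    (by simpa using hcard) hz
  simp only [Real.rpow_one, sum_const, nsmul_eq_mul, mul_one, one_mul] at hamgm
  calc ∏ i ∈ s, z i = ((∏ i ∈ s, z i) ^ ((#s : ℝ)⁻¹)) ^ #s := by
        rw [← Real.rpow_natCast, ← Real.rpow_mul (prod_nonneg hz), inv_mul_cancel₀ hcard.ne',
          Real.rpow_one]
    _ ≤ _ := pow_le_pow_left₀ (Real.rpow_nonneg (prod_nonneg hz) _) hamgm _

theorem Polynomial.eval_derivative_prod_X_sub_C {R ι : Type*} [CommRing R] [DecidableEq ι]
    {s : Finset ι} (v : ι → R) {i : ι} (hi : i ∈ s) :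
    (∏ j ∈ s, (X - C (v j))).derivative.eval (v i) = ∏ j ∈ s.erase i, (v i - v j) := by
  rw [← Lagrange.nodal_eq, Lagrange.eval_nodal_derivative_eval_node_eq hi, Lagrange.eval_nodal]

theorem Polynomial.map_resultant_eq_prod_eval {R K ι : Type*} [CommRing R] [Field K] [Fintype ι]
    (φ : R →+* K) {f : R[X]} (hf : f.Monic) (g : R[X]) {α : ι → K}
    (hfα : f.map φ = ∏ i, (X - C (α i))) :
    φ (resultant f g) = ∏ i, (g.map φ).eval (α i) := by
  have hsplit : (f.map φ).Splits := hfα ▸ Splits.prod fun i _ => Splits.X_sub_C (α i)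
  have hroots : (f.map φ).roots = univ.val.map α := by
    rw [hfα, roots_prod _ _ (hfα ▸ (hf.map φ).ne_zero)]
    simp [Multiset.bind_singleton]
  rw [← resultant_map_map, ← hf.natDegree_map φ,
    resultant_eq_prod_eval _ _ _ natDegree_map_le hsplit, (hf.map φ).leadingCoeff, one_pow,
    one_mul, hroots, Multiset.map_map]
  rfl

theorem Polynomial.map_resultant_derivative_eq_prod_prod_erase_sub {R K ι : Type*} [CommRing R]
    [Field K] [Fintype ι] [DecidableEq ι] (φ : R →+* K) {f : R[X]} (hf : f.Monic) {α : ι → K}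
    (hfα : f.map φ = ∏ i, (X - C (α i))) :
    φ (resultant f (derivative f)) = ∏ i, ∏ j ∈ univ.erase i, (α i - α j) := by
  rw [map_resultant_eq_prod_eval φ hf _ hfα, ← derivative_map, hfα]
  exact prod_congr rfl fun i _ => eval_derivative_prod_X_sub_C α (mem_univ i)

theorem abs_prod_prod_erase_sub {ι : Type*} [Fintype ι] [LinearOrder ι]
    [LocallyFiniteOrderTop ι] [LocallyFiniteOrderBot ι] (γ : ι → ℝ) :
    |∏ i, ∏ j ∈ univ.erase i, (γ i - γ j)| = ∏ i, ∏ j ∈ Ioi i, (γ i - γ j) ^ 2 := by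
  simp_rw [← compl_singleton, ← prod_prod_Ioi_mul_eq_prod_prod_off_diag (fun x y => γ y - γ x),
    abs_prod, abs_mul, abs_sub_comm (γ _) (γ _), abs_mul_abs_self, sq]

theorem Fin.prod_univ_erase_eq_prod_succAbove {M : Type*} [CommMonoid M] {n : ℕ}
    (f : Fin (n + 1) → M) (i : Fin (n + 1)) :
    ∏ j ∈ univ.erase i, f j = ∏ j : Fin n, f (i.succAbove j) := by
  rw [Fin.univ_succAbove n i, erase_cons, prod_map]
  rfl

theorem sum_prod_sub_div_prod_erase_sub_eq_one {K ι κ : Type*} [Field K] [Fintype ι]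
    [DecidableEq ι] [Fintype κ] {a : ι → K} (ha : Function.Injective a) (b : κ → K)
    (hcard : Fintype.card ι = Fintype.card κ + 1) :
    ∑ i, (∏ j, (a i - b j)) / ∏ j ∈ univ.erase i, (a i - a j) = 1 := by
  have hmonic : (∏ j, (X - C (b j))).Monic := monic_prod_of_monic _ _ fun j _ => monic_X_sub_C _
  have hlagrange := Lagrange.leadingCoeff_eq_sum (s := univ) ha.injOn
    (P := ∏ j, (X - C (b j))) (by rw [degree_eq_natDegree hmonic.ne_zero]; simp [hcard])
  simpa [hmonic.leadingCoeff, eval_prod] using hlagrange.symm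

section Interlacing

variable {n : ℕ} {a : Fin (n + 1) → ℝ} {b : Fin n → ℝ}

theorem prod_sub_div_prod_erase_sub_pos (ha : StrictMono a)
    (hab : ∀ j, a j.castSucc < b j ∧ b j < a j.succ) (i : Fin (n + 1)) :
    0 < (∏ j, (a i - b j)) / ∏ j ∈ univ.erase i, (a i - a j) := by
  rw [Fin.prod_univ_erase_eq_prod_succAbove, ← prod_div_distrib]
  refine prod_pos fun j _ => ?_
  rcases lt_or_ge j.castSucc i with h | h
  · have hbi : b j < a i := (hab j).2.trans_le (ha.monotone (Fin.castSucc_lt_iff_succ_le.mp h))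
    rw [Fin.succAbove_of_castSucc_lt _ _ h]
    exact div_pos (sub_pos.2 hbi) (sub_pos.2 (ha h))
  · have hib : a i < b j := (ha.monotone h).trans_lt (hab j).1
    rw [Fin.succAbove_of_le_castSucc _ _ h]
    exact div_pos_of_neg_of_neg (sub_neg.2 hib)
      (sub_neg.2 (ha (h.trans_lt Fin.castSucc_lt_succ)))

theorem pow_le_abs_prod_prod_erase_sub_of_interlace (ha : StrictMono a)
    (hab : ∀ j, a j.castSucc < b j ∧ b j < a j.succ)
    (hres : ∃ N : ℤ, (N : ℝ) = ∏ i, ∏ j, (a i - b j)) :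
    ((n + 1 : ℕ) : ℝ) ^ (n + 1) ≤ |∏ i, ∏ j ∈ univ.erase i, (a i - a j)| := by
  set G : Fin (n + 1) → ℝ := fun i => ∏ j, (a i - b j)
  set P : Fin (n + 1) → ℝ := fun i => ∏ j ∈ univ.erase i, (a i - a j)
  have hpos : ∀ i, 0 < G i / P i := prod_sub_div_prod_erase_sub_pos ha hab
  have hG0 : ∀ i, G i ≠ 0 := fun i => (div_ne_zero_iff.mp (hpos i).ne').1
  have hP0 : ∀ i, P i ≠ 0 := fun i => (div_ne_zero_iff.mp (hpos i).ne').2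
  have hsum : ∑ i, G i / P i = 1 :=
    sum_prod_sub_div_prod_erase_sub_eq_one ha.injective b (by simp)
  have hG : 1 ≤ |∏ i, G i| := by
    obtain ⟨N, hN⟩ := hres
    have hN0 : N ≠ 0 := by
      rintro rfl
      exact prod_ne_zero_iff.mpr (fun i _ => hG0 i) (by simpa using hN.symm)
    rw [← hN, ← Int.cast_abs]
    exact_mod_cast Int.one_le_abs hN0
  have hamgm := Real.prod_le_sum_div_card_pow univ fun i _ => (hpos i).le
  rw [hsum, card_univ, Fintype.card_fin] at hamgm
  have hsplit : |∏ i, G i| = (∏ i, G i / P i) * |∏ i, P i| := by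
    rw [← abs_of_pos (prod_pos fun i _ => hpos i), ← abs_mul, ← prod_mul_distrib]
    simp only [div_mul_cancel₀ _ (hP0 _)]
  calc ((n + 1 : ℕ) : ℝ) ^ (n + 1) ≤ ((n + 1 : ℕ) : ℝ) ^ (n + 1) * |∏ i, G i| :=
        le_mul_of_one_le_right (by positivity) hG
    _ ≤ ((n + 1 : ℕ) : ℝ) ^ (n + 1) * ((1 / (n + 1 : ℕ)) ^ (n + 1) * |∏ i, P i|) := by
        rw [hsplit]; gcongr
    _ = |∏ i, P i| := by
        rw [← mul_assoc, ← mul_pow, mul_one_div_cancel (by positivity), one_pow, one_mul]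

end Interlacing

-- For monic `f` with roots `α`, the right-hand side is `|Disc f|`.
theorem statement13_general (d : ℕ) (f : Polynomial ℤ)
    (hm : f.Monic)
    (α : Fin d → ℝ)
    (hf : f.map (Int.castRingHom ℝ) = ∏ i, (X - C (α i)))
    (hint : ∃ g : Polynomial ℤ, Interlaces g f) :
    (d : ℝ) ^ d ≤ ∏ i, ∏ j ∈ Finset.univ.filter (fun j => i < j), (α i - α j) ^ 2 := by
  obtain ⟨g, n, -, a, b, ha, hfa, hgb, hab⟩ := hint
  obtain rfl : d = n + 1 := by simpa using congrArg natDegree (hf.symm.trans hfa)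
  have hdisc : ∏ i, ∏ j ∈ univ.erase i, (α i - α j) = ∏ i, ∏ j ∈ univ.erase i, (a i - a j) := by
    rw [← map_resultant_derivative_eq_prod_prod_erase_sub _ hm hf,
      map_resultant_derivative_eq_prod_prod_erase_sub _ hm hfa]
  simp only [filter_lt_eq_Ioi, ← abs_prod_prod_erase_sub, hdisc]
  refine pow_le_abs_prod_prod_erase_sub_of_interlace ha hab ⟨resultant f g, ?_⟩
  rw [← eq_intCast (Int.castRingHom ℝ), map_resultant_eq_prod_eval _ hm g hfa, hgb]
  simp [eval_prod]

/-- Let `f ∈ ℤ[X]` be monic irreducible of degree `d ≥ 2` with (distinct) real roots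
`α 0, …, α (d-1)`.  If some monic integer polynomial interlaces `f`, then
`|Disc(f)| ≥ d^d`; since `f` is monic with real roots, `|Disc(f)| = ∏_{i<j} (α i − α j)²`. -/
theorem statement13 (d : ℕ) (hd : 2 ≤ d) (f : Polynomial ℤ)
    (hm : f.Monic) (hirr : Irreducible f)
    (α : Fin d → ℝ) (hα : Function.Injective α)
    (hf : f.map (Int.castRingHom ℝ) = ∏ i, (X - C (α i)))
    (hint : ∃ g : Polynomial ℤ, Interlaces g f) :
    (d : ℝ) ^ d ≤ ∏ i, ∏ j ∈ Finset.univ.filter (fun j => i < j), (α i - α j) ^ 2 :=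
  statement13_general d f hm α hf hint
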